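/- Let F be a piecewise translation of m branches in ℝ^d and let 𝓕 : Ω → {0, …, m−1}^ℕ be its fate map. If ω ∈ {0, …, m−1}^ℕ is aperiodic, i.e. the shifts σ^n ω, n ≥ 0, are pairwise distinct (ω is not eventually periodic), then Leb(𝓕^{-1}(ω)) = 0. -/

import Mathlib

open MeasureTheory Topology Filter Set

/-- A piecewise translation map (PWT) of `m` branches in `ℝ^d`: a region `Ω`
partitioned into regions `P 0, …, P (m-1)` with null boundaries and pairwise disjoint
interiors, together with translation vectors `v i` such that `P i + v i ⊆ Ω`, and a fixed
measurable resolution `idx` of the ambiguity on overlapping boundaries. -/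
structure PWT (d m : ℕ) where
  Om : Set (Fin d → ℝ)
  P : Fin m → Set (Fin d → ℝ)
  v : Fin m → (Fin d → ℝ)
  idx : (Fin d → ℝ) → Fin m
  compact_Om : IsCompact Om
  region_Om : Om = closure (interior Om)
  compact_P : ∀ i, IsCompact (P i)
  region_P : ∀ i, P i = closure (interior (P i))
  union_P : Om = ⋃ i, P i
  disj_P : ∀ i j, i ≠ j → interior (P i) ∩ interior (P j) = ∅
  null_bd_P : ∀ i, volume (frontier (P i)) = 0
  translate_mem : ∀ i, ∀ x ∈ P i, x + v i ∈ Om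
  idx_mem : ∀ x ∈ Om, x ∈ P (idx x)
  idx_meas : Measurable idx

namespace PWT

variable {d m : ℕ}

/-- The piecewise translation map `F(x) = x + v_{i(x)}`. -/
def F (T : PWT d m) (x : Fin d → ℝ) : Fin d → ℝ := x + T.v (T.idx x)

/-- `Ω_0 = Ω`, `Ω_{n+1} = closure (F(Ω_n))`. -/
def OmSeq (T : PWT d m) : ℕ → Set (Fin d → ℝ)
  | 0 => T.Om
  | n + 1 => closure (T.F '' T.OmSeq n)

/-- The attractor `A = ⋂ₙ Ω_n`. -/
def attractor (T : PWT d m) : Set (Fin d → ℝ) := ⋂ n, T.OmSeq n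

/-- The fate map `𝓕(x) = (i(x), i(F x), i(F² x), …)`. -/
def fate (T : PWT d m) (x : Fin d → ℝ) : ℕ → Fin m := fun n => T.idx (T.F^[n] x)

/-- The matrix whose columns are the lattice generators `v_1 - v_0, …, v_d - v_0`. -/
noncomputable def latMatrix (T : PWT d (d + 1)) : Matrix (Fin d) (Fin d) ℝ :=
  Matrix.of fun i j => (T.v j.succ - T.v 0) i

/-- The canonical projection `π : ℝ^d → T = ℝ^d/L ≅ (ℝ/ℤ)^d`, expressed in the
coordinates given by the lattice basis `v_1 - v_0, …, v_d - v_0` of `L`. -/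
noncomputable def torusProj (T : PWT d (d + 1)) (x : Fin d → ℝ) : Fin d → AddCircle (1 : ℝ) :=
  fun i => ((T.latMatrix⁻¹.mulVec x) i : AddCircle (1 : ℝ))

end PWT

/-!
On the fate fiber of `ω` every point follows the same itinerary, so `F^n` acts there as a single
translation and carries the fiber of `ω` into the fiber of its `n`-th shift without losing volume.
Aperiodicity makes these shifted fibers pairwise disjoint, and they all lie in the compact set `Ω`:
infinitely many disjoint sets of measure at least `Leb(𝓕⁻¹(ω))` fit into a set of finite measure.
-/

open scoped ENNReal Function

theorem MeasureTheory.measure_eq_zero_of_le_of_pairwise_disjoint {α : Type*}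
    [MeasurableSpace α] {μ : Measure α} {s t : Set α} {G : ℕ → Set α} (hs : μ s ≠ ∞)
    (hGs : ∀ n, G n ⊆ s) (hGm : ∀ n, MeasurableSet (G n)) (hG : Pairwise (Disjoint on G))
    (ht : ∀ n, μ t ≤ μ (G n)) : μ t = 0 := by
  have hsum : ∑' n, μ (G n) ≠ ∞ := by
    refine ne_top_of_le_ne_top hs ?_
    calc ∑' n, μ (G n) ≤ μ (⋃ n, G n) := tsum_meas_le_meas_iUnion_of_disjoint μ hGm hG
      _ ≤ μ s := measure_mono (iUnion_subset hGs)
  exact nonpos_iff_eq_zero.1 <|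
    ge_of_tendsto' (ENNReal.tendsto_atTop_zero_of_tsum_ne_top hsum) ht

namespace PWT

variable {d m : ℕ} (T : PWT d m)

def fateFiber (ρ : ℕ → Fin m) : Set (Fin d → ℝ) := {x | x ∈ T.Om ∧ T.fate x = ρ}

theorem measurable_F : Measurable T.F :=
  measurable_id.add ((Measurable.of_discrete (f := T.v)).comp T.idx_meas)

theorem measurable_fate : Measurable T.fate :=
  measurable_pi_lambda _ fun n => T.idx_meas.comp (T.measurable_F.iterate n)

theorem measurableSet_fateFiber (ρ : ℕ → Fin m) : MeasurableSet (T.fateFiber ρ) :=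
  T.compact_Om.measurableSet.inter (T.measurable_fate (measurableSet_singleton ρ))

theorem fateFiber_subset (ρ : ℕ → Fin m) : T.fateFiber ρ ⊆ T.Om := fun _ hx => hx.1

theorem disjoint_fateFiber {ρ ρ' : ℕ → Fin m} (h : ρ ≠ ρ') :
    Disjoint (T.fateFiber ρ) (T.fateFiber ρ') :=
  disjoint_left.2 fun _ hx hx' => h (hx.2.symm.trans hx'.2)

theorem mapsTo_F : MapsTo T.F T.Om T.Om := fun x hx => T.translate_mem _ x (T.idx_mem x hx)

theorem fate_iterate_F (n : ℕ) (x : Fin d → ℝ) :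
    T.fate (T.F^[n] x) = fun k => T.fate x (n + k) := by
  funext k
  simp only [fate, ← Function.iterate_add_apply, Nat.add_comm]

theorem iterate_F_eq_add_sum (n : ℕ) (x : Fin d → ℝ) :
    T.F^[n] x = x + ∑ k ∈ Finset.range n, T.v (T.fate x k) := by
  induction n with
  | zero => simp
  | succ n ih =>
    rw [Function.iterate_succ_apply', Finset.sum_range_succ, ← add_assoc, ← ih]
    rfl

theorem mapsTo_add_fateFiber (ω : ℕ → Fin m) (n : ℕ) :
    MapsTo (· + ∑ k ∈ Finset.range n, T.v (ω k)) (T.fateFiber ω)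
      (T.fateFiber fun k => ω (n + k)) := by
  rintro x ⟨hxΩ, rfl⟩
  show x + _ ∈ _
  rw [← iterate_F_eq_add_sum]
  exact ⟨T.mapsTo_F.iterate n hxΩ, T.fate_iterate_F n x⟩

theorem volume_fateFiber_le_shift (ω : ℕ → Fin m) (n : ℕ) :
    volume (T.fateFiber ω) ≤ volume (T.fateFiber fun k => ω (n + k)) :=
  calc volume (T.fateFiber ω)
      ≤ volume ((· + ∑ k ∈ Finset.range n, T.v (ω k)) ⁻¹' T.fateFiber fun k => ω (n + k)) :=
        measure_mono (T.mapsTo_add_fateFiber ω n)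
    _ = volume (T.fateFiber fun k => ω (n + k)) := measure_preimage_add_right _ _ _

end PWT

/-- For a piecewise translation of `m` branches in `ℝ^d` with fate map `𝓕`,
if `ω` is aperiodic (its shifts are pairwise distinct), then `Leb(𝓕⁻¹(ω)) = 0`. -/
theorem pwt_aperiodic_fate_null {d m : ℕ} (T : PWT d m) (ω : ℕ → Fin m)
    (haper : ∀ n₁ n₂ : ℕ, n₁ ≠ n₂ →
      (fun k => ω (n₁ + k)) ≠ (fun k => ω (n₂ + k))) :
    volume {x | x ∈ T.Om ∧ T.fate x = ω} = 0 :=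
  measure_eq_zero_of_le_of_pairwise_disjoint T.compact_Om.measure_lt_top.ne
    (fun _ => T.fateFiber_subset _) (fun _ => T.measurableSet_fateFiber _)
    (fun _ _ hne => T.disjoint_fateFiber (haper _ _ hne)) (T.volume_fateFiber_le_shift ω)
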